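/- If the laws of X and Y are absolutely continuous with respect to Lebesgue measure on ℝ^p and ℝ^q respectively, then the map (ρk, ρl) ↦ dCov^{ρk,ρl}(X,Y) is continuous on [0,1] × [0,1]; in particular the map ρ ↦ dVar^{ρ}(X) = dCov^{ρ,ρ}(X,X) is continuous on [0,1]. -/

import Mathlib

open MeasureTheory ProbabilityTheory Filter Metric
open scoped Classical ProbabilityTheory

noncomputable section

/-- Euclidean space ℝ^p. -/
abbrev Euc (p : ℕ) := EuclideanSpace ℝ (Fin p)

/-- The indicator `1{μ(closedBall(x, ‖x'−x‖)) ≤ ρ}`. -/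
def locInd {p : ℕ} (μ : Measure (Euc p)) (ρ : ℝ) (x x' : Euc p) : ℝ :=
  if (μ (Metric.closedBall x (dist x' x))).toReal ≤ ρ then 1 else 0

/-- The truncated distance difference `(‖x−x'‖ − ‖x−x''‖)·I^ρ_{x,x'}`. -/
def dLoc {p : ℕ} (μ : Measure (Euc p)) (ρ : ℝ) (x x' x'' : Euc p) : ℝ :=
  (dist x x' - dist x x'') * locInd μ ρ x x'

variable {Ω : Type*} [MeasureSpace Ω] {p q : ℕ}

/-- Population local covariance `dCov^{ρk,ρl}(X,Y)`, built from four iid copies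
`Z 0, Z 1, Z 2, Z 3` of `(X,Y)`:
`E(d^{ρk}_X · d^{ρl}_{Y'}) − E(d^{ρk}_X)·E(d^{ρl}_{Y'})`. -/
def dCovPop (Z : Fin 4 → Ω → Euc p × Euc q) (ρk ρl : ℝ) : ℝ :=
  (∫ ω, dLoc (Measure.map (fun ω' => (Z 0 ω').1) ℙ) ρk (Z 0 ω).1 (Z 1 ω).1 (Z 2 ω).1 *
        dLoc (Measure.map (fun ω' => (Z 0 ω').2) ℙ) ρl (Z 1 ω).2 (Z 0 ω).2 (Z 3 ω).2) -
  (∫ ω, dLoc (Measure.map (fun ω' => (Z 0 ω').1) ℙ) ρk (Z 0 ω).1 (Z 1 ω).1 (Z 2 ω).1) *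
  (∫ ω, dLoc (Measure.map (fun ω' => (Z 0 ω').2) ℙ) ρl (Z 1 ω).2 (Z 0 ω).2 (Z 3 ω).2)

/-- Population local variance `dVar^{ρ}(X) = dCov^{ρ,ρ}(X,X)`, built from four iid copies
`W 0, …, W 3` of `X`. -/
def dVarPop (W : Fin 4 → Ω → Euc p) (ρ : ℝ) : ℝ :=
  (∫ ω, dLoc (Measure.map (W 0) ℙ) ρ (W 0 ω) (W 1 ω) (W 2 ω) *
        dLoc (Measure.map (W 0) ℙ) ρ (W 1 ω) (W 0 ω) (W 3 ω)) -
  (∫ ω, dLoc (Measure.map (W 0) ℙ) ρ (W 0 ω) (W 1 ω) (W 2 ω)) *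
  (∫ ω, dLoc (Measure.map (W 0) ℙ) ρ (W 1 ω) (W 0 ω) (W 3 ω))

/-- Population local correlation `dCorr^{ρk,ρl}(X,Y)`. -/
def dCorrPop (Z : Fin 4 → Ω → Euc p × Euc q) (ρk ρl : ℝ) : ℝ :=
  dCovPop Z ρk ρl /
    Real.sqrt (dVarPop (fun i ω => (Z i ω).1) ρk * dVarPop (fun i ω => (Z i ω).2) ρl)

/-- The domain `S_ε` of local scales. -/
def Sset (Z : Fin 4 → Ω → Euc p × Euc q) (ε : ℝ) : Set (ℝ × ℝ) :=
  {ρ | ρ ∈ Set.Icc (0:ℝ) 1 ×ˢ Set.Icc (0:ℝ) 1 ∧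
    ε ≤ min (dVarPop (fun i ω => (Z i ω).1) ρ.1) (dVarPop (fun i ω => (Z i ω).2) ρ.2)}

/-- Population MGC `c*(X,Y)`: the supremum of local correlations over `S_ε`. -/
def cstar (Z : Fin 4 → Ω → Euc p × Euc q) (ε : ℝ) : ℝ :=
  sSup ((fun ρ : ℝ × ℝ => dCorrPop Z ρ.1 ρ.2) '' Sset Z ε)

/-!
For fixed `x`, the ball mass `x' ↦ μ (closedBall x ‖x' - x‖)` is the CDF of `‖X - x‖` evaluated
at `‖x' - x‖`. When `μ` charges no sphere (true for absolutely continuous laws in positive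
dimension) this CDF is continuous, so none of its level sets carries mass. Hence for independent
`X, X' ~ μ` and any `ρ₀`, almost surely the ball mass `μ (closedBall X ‖X' - X‖)` differs from
`ρ₀`, i.e. the indicator `I^ρ_{X,X'}` is continuous in `ρ` at `ρ₀`. Since
`|d^ρ_X| ≤ ‖X' - X''‖` is square integrable, dominated convergence makes every expectation in
`dCov^{ρk,ρl}` continuous; `dVar` is the special case `Y = X`.
-/
open Set

theorem ProbabilityTheory.continuous_cdf (ν : Measure ℝ) [IsProbabilityMeasure ν]
    [NullSingletonClass ν] :
    Continuous (cdf ν) := by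
  refine continuous_iff_continuousAt.2 fun x => ?_
  rw [(monotone_cdf ν).continuousAt_iff_leftLim_eq_rightLim, (cdf ν).rightLim_eq]
  have hjump := (cdf ν).measure_singleton x
  rw [measure_cdf, measure_singleton, eq_comm, ENNReal.ofReal_eq_zero, sub_nonpos] at hjump
  exact le_antisymm ((monotone_cdf ν).leftLim_le le_rfl) hjump

theorem ProbabilityTheory.measure_cdf_preimage_singleton (ν : Measure ℝ) [IsProbabilityMeasure ν]
    [NullSingletonClass ν] (a : ℝ) : ν (cdf ν ⁻¹' {a}) = 0 := by
  set I := cdf ν ⁻¹' {a}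
  have hI : I = ⋃ n : ℕ, I ∩ closedBall 0 n := by
    rw [← inter_iUnion, iUnion_closedBall_nat, inter_univ]
  rw [hI]
  refine measure_iUnion_null fun n => ?_
  set K := I ∩ closedBall 0 n
  rcases K.eq_empty_or_nonempty with hK | hK
  · rw [hK, measure_empty]
  have hKc : IsCompact K :=
    (isCompact_closedBall 0 _).inter_left (isClosed_singleton.preimage (continuous_cdf ν))
  have hinf : cdf ν (sInf K) = a := (hKc.sInf_mem hK).1
  have hsup : cdf ν (sSup K) = a := (hKc.sSup_mem hK).1
  have hsub : K ⊆ Icc (sInf K) (sSup K) := fun r hr =>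
    ⟨csInf_le hKc.bddBelow hr, le_csSup hKc.bddAbove hr⟩
  refine measure_mono_null hsub ?_
  rw [← measure_congr Ioc_ae_eq_Icc, ← measure_cdf ν, (cdf ν).measure_Ioc, hinf, hsup, sub_self,
    ENNReal.ofReal_zero]

section BallMass

variable {α : Type*} [PseudoMetricSpace α] [MeasurableSpace α] [OpensMeasurableSpace α]

theorem measure_setOf_measure_closedBall_dist_eq (μ : Measure α) [IsProbabilityMeasure μ] {x : α}
    (hsphere : ∀ r, μ (sphere x r) = 0) (a : ℝ) :
    μ {y | (μ (closedBall x (dist y x))).toReal = a} = 0 := by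
  have hd : Measurable fun y => dist y x := (continuous_id.dist continuous_const).measurable
  set ν := μ.map fun y => dist y x
  have : IsProbabilityMeasure ν := Measure.isProbabilityMeasure_map hd.aemeasurable
  have : NullSingletonClass ν :=
    ⟨fun r => by rw [Measure.map_apply hd (measurableSet_singleton r)]; exact hsphere r⟩
  have hcdf : ∀ r, cdf ν r = (μ (closedBall x r)).toReal := fun r => by
    rw [cdf_eq_real, measureReal_def, Measure.map_apply hd measurableSet_Iic]; rfl
  have hpre : {y | (μ (closedBall x (dist y x))).toReal = a} =
      (fun y => dist y x) ⁻¹' (cdf ν ⁻¹' {a}) := by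
    ext y; simp [hcdf]
  rw [hpre, ← nonpos_iff_eq_zero, ← measure_cdf_preimage_singleton ν a]
  exact Measure.le_map_apply hd.aemeasurable _

variable [SecondCountableTopology α]

theorem measurable_measure_closedBall_dist (μ : Measure α) [SFinite μ] :
    Measurable fun z : α × α => μ (closedBall z.1 (dist z.2 z.1)) :=
  measurable_measure_prodMk_left <| measurableSet_le
    (continuous_snd.dist (continuous_fst.comp continuous_fst)).measurable
    ((continuous_snd.comp continuous_fst).dist (continuous_fst.comp continuous_fst)).measurable

theorem ae_prod_measure_closedBall_dist_ne (μ : Measure α) [IsProbabilityMeasure μ]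
    (hsphere : ∀ x r, μ (sphere x r) = 0) (a : ℝ) :
    ∀ᵐ z ∂μ.prod μ, (μ (closedBall z.1 (dist z.2 z.1))).toReal ≠ a := by
  have hmeas : MeasurableSet {z : α × α | (μ (closedBall z.1 (dist z.2 z.1))).toReal = a} :=
    (measurable_measure_closedBall_dist μ).ennreal_toReal (measurableSet_singleton a)
  simp only [ae_iff, not_not]
  exact (Measure.measure_prod_null hmeas).2 <| ae_of_all _ fun x =>
    measure_setOf_measure_closedBall_dist_eq μ (hsphere x) a

theorem ProbabilityTheory.IndepFun.ae_measure_closedBall_dist_ne {Ω : Type*} [MeasurableSpace Ω]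
    {P : Measure Ω} [IsFiniteMeasure P] {μ : Measure α} [IsProbabilityMeasure μ] {X X' : Ω → α}
    (hX : AEMeasurable X P) (hX' : AEMeasurable X' P) (hind : IndepFun X X' P)
    (hlaw : P.map X = μ) (hlaw' : P.map X' = μ) (hsphere : ∀ x r, μ (sphere x r) = 0) (a : ℝ) :
    ∀ᵐ ω ∂P, (μ (closedBall (X ω) (dist (X' ω) (X ω)))).toReal ≠ a := by
  have hjoint : P.map (fun ω => (X ω, X' ω)) = μ.prod μ := by
    rw [(indepFun_iff_map_prod_eq_prod_map_map hX hX').1 hind, hlaw, hlaw']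
  have h := ae_prod_measure_closedBall_dist_ne μ hsphere a
  rw [← hjoint] at h
  exact ae_of_ae_map (hX.prodMk hX') h

end BallMass

theorem continuousAt_locInd {p : ℕ} {μ : Measure (Euc p)} {ρ₀ : ℝ} {x x' : Euc p}
    (h : (μ (closedBall x (dist x' x))).toReal ≠ ρ₀) :
    ContinuousAt (fun ρ => locInd μ ρ x x') ρ₀ := by
  unfold locInd
  rcases h.lt_or_gt with h | h
  · exact EventuallyEq.continuousAt (y := 1) <|
      (eventually_gt_nhds h).mono fun ρ hρ => if_pos hρ.le
  · exact EventuallyEq.continuousAt (y := 0) <|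
      (eventually_lt_nhds h).mono fun ρ hρ => if_neg (not_le.2 hρ)

theorem abs_dLoc_le {p : ℕ} (μ : Measure (Euc p)) (ρ : ℝ) (x x' x'' : Euc p) :
    |dLoc μ ρ x x' x''| ≤ dist x' x'' := by
  have hind : |locInd μ ρ x x'| ≤ 1 := by unfold locInd; split_ifs <;> simp
  have hdist : |dist x x' - dist x x''| ≤ dist x' x'' := by
    simpa only [dist_comm x] using abs_dist_sub_le x' x'' x
  rw [dLoc, abs_mul, ← mul_one (dist x' x'')]
  exact mul_le_mul hdist hind (abs_nonneg _) dist_nonneg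

theorem measurable_dLoc {Ω : Type*} [MeasurableSpace Ω] {p : ℕ} (μ : Measure (Euc p)) [SFinite μ]
    (ρ : ℝ) {X X' X'' : Ω → Euc p} (hX : Measurable X) (hX' : Measurable X')
    (hX'' : Measurable X'') : Measurable fun ω => dLoc μ ρ (X ω) (X' ω) (X'' ω) := by
  have hmass : Measurable fun ω => (μ (closedBall (X ω) (dist (X' ω) (X ω)))).toReal :=
    (measurable_measure_closedBall_dist μ).ennreal_toReal.comp (f := fun ω => (X ω, X' ω))
      (hX.prodMk hX')
  exact ((hX.dist hX').sub (hX.dist hX'')).mul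
    (Measurable.ite (measurableSet_le hmass measurable_const) measurable_const measurable_const)

theorem MeasureTheory.MemLp.dist {Ω E : Type*} [MeasurableSpace Ω] [NormedAddCommGroup E]
    {P : Measure Ω} {r : ENNReal} {f g : Ω → E} (hf : MemLp f r P) (hg : MemLp g r P) :
    MemLp (fun ω => dist (f ω) (g ω)) r P := by
  simp only [dist_eq_norm]
  exact (hf.sub hg).norm

section IntegralDLoc

variable {Ω : Type*} [MeasurableSpace Ω] {P : Measure Ω} [IsFiniteMeasure P] {p q : ℕ}
  {μ : Measure (Euc p)} [IsProbabilityMeasure μ] {X X' X'' : Ω → Euc p}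

theorem ae_continuousAt_dLoc (hX : Measurable X) (hX' : Measurable X') (hind : IndepFun X X' P)
    (hlaw : P.map X = μ) (hlaw' : P.map X' = μ) (hsphere : ∀ x r, μ (sphere x r) = 0)
    (ρ₀ : ℝ) : ∀ᵐ ω ∂P, ContinuousAt (fun ρ => dLoc μ ρ (X ω) (X' ω) (X'' ω)) ρ₀ :=
  (hind.ae_measure_closedBall_dist_ne hX.aemeasurable hX'.aemeasurable hlaw hlaw' hsphere ρ₀).mono
    fun _ h => continuousAt_const.mul (continuousAt_locInd h)

theorem continuous_integral_dLoc (hX : Measurable X) (hX' : Measurable X')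
    (hX'' : Measurable X'') (hind : IndepFun X X' P) (hlaw : P.map X = μ) (hlaw' : P.map X' = μ)
    (hsphere : ∀ x r, μ (sphere x r) = 0)
    (hint : Integrable (fun ω => dist (X' ω) (X'' ω)) P) :
    Continuous fun ρ => ∫ ω, dLoc μ ρ (X ω) (X' ω) (X'' ω) ∂P :=
  continuous_iff_continuousAt.2 fun ρ₀ => continuousAt_of_dominated
    (Eventually.of_forall fun ρ => (measurable_dLoc μ ρ hX hX' hX'').aestronglyMeasurable)
    (Eventually.of_forall fun ρ => ae_of_all _ fun _ =>
      (Real.norm_eq_abs _).trans_le (abs_dLoc_le μ ρ _ _ _))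
    hint (ae_continuousAt_dLoc hX hX' hind hlaw hlaw' hsphere ρ₀)

theorem continuous_integral_dLoc_mul_dLoc {ν : Measure (Euc q)} [IsProbabilityMeasure ν]
    {Y Y' Y'' : Ω → Euc q} (hX : Measurable X) (hX' : Measurable X') (hX'' : Measurable X'')
    (hY : Measurable Y) (hY' : Measurable Y') (hY'' : Measurable Y'')
    (hindX : IndepFun X X' P) (hindY : IndepFun Y Y' P)
    (hlawX : P.map X = μ) (hlawX' : P.map X' = μ) (hlawY : P.map Y = ν) (hlawY' : P.map Y' = ν)
    (hsphereX : ∀ x r, μ (sphere x r) = 0) (hsphereY : ∀ y r, ν (sphere y r) = 0)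
    (hint : Integrable (fun ω => dist (X' ω) (X'' ω) * dist (Y' ω) (Y'' ω)) P) :
    Continuous fun ρ : ℝ × ℝ =>
      ∫ ω, dLoc μ ρ.1 (X ω) (X' ω) (X'' ω) * dLoc ν ρ.2 (Y ω) (Y' ω) (Y'' ω) ∂P := by
  refine continuous_iff_continuousAt.2 fun ρ₀ => continuousAt_of_dominated
    (Eventually.of_forall fun ρ => ((measurable_dLoc μ ρ.1 hX hX' hX'').mul
      (measurable_dLoc ν ρ.2 hY hY' hY'')).aestronglyMeasurable)
    (Eventually.of_forall fun ρ => ae_of_all _ fun ω => ?_) hint ?_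
  · rw [Real.norm_eq_abs, abs_mul]
    exact mul_le_mul (abs_dLoc_le μ _ _ _ _) (abs_dLoc_le ν _ _ _ _) (abs_nonneg _) dist_nonneg
  · filter_upwards [ae_continuousAt_dLoc (X'' := X'') hX hX' hindX hlawX hlawX' hsphereX ρ₀.1,
      ae_continuousAt_dLoc (X'' := Y'') hY hY' hindY hlawY hlawY' hsphereY ρ₀.2] with ω h₁ h₂
    exact (h₁.comp continuousAt_fst).mul (h₂.comp continuousAt_snd)

end IntegralDLoc

theorem continuous_dCovPop {Ω : Type*} [MeasureSpace Ω] [IsProbabilityMeasure (ℙ : Measure Ω)]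
    {p q : ℕ} (Z : Fin 4 → Ω → Euc p × Euc q) (hmeas : ∀ i, Measurable (Z i))
    (hindep : iIndepFun Z ℙ) (hid : ∀ i, Measure.map (Z i) ℙ = Measure.map (Z 0) ℙ)
    (hX : MemLp (fun ω => (Z 0 ω).1) 2) (hY : MemLp (fun ω => (Z 0 ω).2) 2)
    (hsphereX : ∀ x r, Measure.map (fun ω => (Z 0 ω).1) ℙ (sphere x r) = 0)
    (hsphereY : ∀ y r, Measure.map (fun ω => (Z 0 ω).2) ℙ (sphere y r) = 0) :
    Continuous fun ρ : ℝ × ℝ => dCovPop Z ρ.1 ρ.2 := by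
  have : IsProbabilityMeasure (Measure.map (fun ω => (Z 0 ω).1) ℙ) :=
    Measure.isProbabilityMeasure_map (hmeas 0).fst.aemeasurable
  have : IsProbabilityMeasure (Measure.map (fun ω => (Z 0 ω).2) ℙ) :=
    Measure.isProbabilityMeasure_map (hmeas 0).snd.aemeasurable
  have hident (i : Fin 4) : IdentDistrib (Z i) (Z 0) :=
    ⟨(hmeas i).aemeasurable, (hmeas 0).aemeasurable, hid i⟩
  have hXi (i : Fin 4) : IdentDistrib (fun ω => (Z i ω).1) (fun ω => (Z 0 ω).1) :=
    (hident i).comp measurable_fst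
  have hYi (i : Fin 4) : IdentDistrib (fun ω => (Z i ω).2) (fun ω => (Z 0 ω).2) :=
    (hident i).comp measurable_snd
  have hindX {i j : Fin 4} (hij : i ≠ j) := (hindep.indepFun hij).comp measurable_fst measurable_fst
  have hindY {i j : Fin 4} (hij : i ≠ j) := (hindep.indepFun hij).comp measurable_snd measurable_snd
  have hdX := ((hXi 1).memLp_iff.2 hX).dist ((hXi 2).memLp_iff.2 hX)
  have hdY := ((hYi 0).memLp_iff.2 hY).dist ((hYi 3).memLp_iff.2 hY)
  have hmeanX := continuous_integral_dLoc (hmeas 0).fst (hmeas 1).fst (hmeas 2).fst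
    (hindX (by decide : (0 : Fin 4) ≠ 1)) rfl (hXi 1).map_eq hsphereX (hdX.integrable one_le_two)
  have hmeanY := continuous_integral_dLoc (hmeas 1).snd (hmeas 0).snd (hmeas 3).snd
    (hindY (by decide : (1 : Fin 4) ≠ 0)) (hYi 1).map_eq rfl hsphereY (hdY.integrable one_le_two)
  have hjoint := continuous_integral_dLoc_mul_dLoc (hmeas 0).fst (hmeas 1).fst (hmeas 2).fst
    (hmeas 1).snd (hmeas 0).snd (hmeas 3).snd (hindX (by decide : (0 : Fin 4) ≠ 1))
    (hindY (by decide : (1 : Fin 4) ≠ 0)) rfl (hXi 1).map_eq (hYi 1).map_eq rfl hsphereX hsphereY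
    (hdX.integrable_mul hdY)
  exact hjoint.sub ((hmeanX.comp continuous_fst).mul (hmeanY.comp continuous_snd))

/-- **Theorem 3(a) (continuity).** If the marginal laws of `X` and `Y` are absolutely continuous
with respect to Lebesgue measure, then `(ρk, ρl) ↦ dCov^{ρk,ρl}(X,Y)` is continuous on
`[0,1] × [0,1]`; in particular `ρ ↦ dVar^{ρ}(X)` is continuous on `[0,1]`. -/
theorem dCovPop_continuousOn {Ω : Type*} [MeasureSpace Ω]
    [IsProbabilityMeasure (ℙ : Measure Ω)] {p q : ℕ} (hp : 0 < p) (hq : 0 < q)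
    (Z : Fin 4 → Ω → Euc p × Euc q) (hmeas : ∀ i, Measurable (Z i))
    (hindep : iIndepFun Z ℙ)
    (hid : ∀ i, Measure.map (Z i) ℙ = Measure.map (Z 0) ℙ)
    (hX2 : Integrable (fun ω => ‖(Z 0 ω).1‖ ^ 2) ℙ)
    (hY2 : Integrable (fun ω => ‖(Z 0 ω).2‖ ^ 2) ℙ)
    (hACX : Measure.map (fun ω => (Z 0 ω).1) ℙ ≪ (volume : Measure (Euc p)))
    (hACY : Measure.map (fun ω => (Z 0 ω).2) ℙ ≪ (volume : Measure (Euc q))) :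
    ContinuousOn (fun ρ : ℝ × ℝ => dCovPop Z ρ.1 ρ.2)
        (Set.Icc (0:ℝ) 1 ×ˢ Set.Icc (0:ℝ) 1) ∧
      ContinuousOn (fun ρ : ℝ => dVarPop (fun i ω => (Z i ω).1) ρ) (Set.Icc (0:ℝ) 1) := by
  have : Nonempty (Fin p) := ⟨⟨0, hp⟩⟩
  have : Nonempty (Fin q) := ⟨⟨0, hq⟩⟩
  have hX := (memLp_two_iff_integrable_sq_norm (hmeas 0).fst.aestronglyMeasurable).2 hX2
  have hY := (memLp_two_iff_integrable_sq_norm (hmeas 0).snd.aestronglyMeasurable).2 hY2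
  have hsphereX (x : Euc p) (r : ℝ) := hACX (Measure.addHaar_sphere volume x r)
  have hsphereY (y : Euc q) (r : ℝ) := hACY (Measure.addHaar_sphere volume y r)
  refine ⟨(continuous_dCovPop Z hmeas hindep hid hX hY hsphereX hsphereY).continuousOn, ?_⟩
  have hdiag : Measurable fun z : Euc p × Euc q => (z.1, z.1) :=
    measurable_fst.prodMk measurable_fst
  have hvar := continuous_dCovPop (fun i ω => ((Z i ω).1, (Z i ω).1))
    (fun i => hdiag.comp (hmeas i)) (hindep.comp _ fun _ => hdiag)
    (fun i => (IdentDistrib.comp ⟨(hmeas i).aemeasurable, (hmeas 0).aemeasurable, hid i⟩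
      hdiag).map_eq)
    hX hX hsphereX hsphereX
  -- `dVarPop W ρ` is, by definition, `dCovPop` of the pairs `(W i, W i)` at `(ρ, ρ)`.
  exact (hvar.comp (continuous_id.prodMk continuous_id)).continuousOn
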